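/- Let d ≥ 1 and let A₁, A₂, A₃, A₄ ∈ M_d(ℂ) satisfy ∑_{k=1}^4 A_k* A_k = I_d and ∑_{k=1}^4 A_k A_k* = I_d. Define U = ∑_{j,k=1}^{4} (A_j* A_k) ⊗ (2|e_j⟩⟨e_k| − δ_{jk} I₄) ∈ M_d(ℂ) ⊗ M₄(ℂ). Then U is unitary, and for every ρ ∈ M_d(ℂ), (I ⊗ Tr)(U*(ρ ⊗ (1/4)I₄)U) = ∑_{j,k=1}^4 A_j* A_k ρ A_k* A_j. Consequently, if Φ(ρ) = ∑_{k=1}^4 A_k* ρ A_k is a UCPT map with Choi rank at most 4, then Φ ∘ Φ* has an exact factorization through M_d(ℂ) ⊗ M₄(ℂ). -/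

import Mathlib

open Matrix
open scoped Kronecker

noncomputable section

/-- `Φ(ρ) = ∑_{k=1}^4 A_k* ρ A_k`. -/
def PhiOf (d : ℕ) (A : Fin 4 → Matrix (Fin d) (Fin d) ℂ)
    (ρ : Matrix (Fin d) (Fin d) ℂ) : Matrix (Fin d) (Fin d) ℂ :=
  ∑ k : Fin 4, (A k)ᴴ * ρ * A k

/-- The adjoint map `Φ*(ρ) = ∑_{k=1}^4 A_k ρ A_k*`. -/
def PhiStarOf (d : ℕ) (A : Fin 4 → Matrix (Fin d) (Fin d) ℂ)
    (ρ : Matrix (Fin d) (Fin d) ℂ) : Matrix (Fin d) (Fin d) ℂ :=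
  ∑ k : Fin 4, A k * ρ * (A k)ᴴ

/-- `U = ∑_{j,k=1}^4 (A_j* A_k) ⊗ (2|e_j⟩⟨e_k| − δ_{jk} I₄)`. -/
def Ufact (d : ℕ) (A : Fin 4 → Matrix (Fin d) (Fin d) ℂ) :
    Matrix (Fin d × Fin 4) (Fin d × Fin 4) ℂ :=
  ∑ j : Fin 4, ∑ k : Fin 4,
    ((A j)ᴴ * A k) ⊗ₖ
      ((2 : ℂ) • Matrix.single j k (1 : ℂ) -
        (if j = k then (1 : Matrix (Fin 4) (Fin 4) ℂ) else 0))

/-!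
Let `V` be the column of blocks `A_k*`. Then `V*V = ∑ A_k A_k* = 1`, so `P = VV*` is a projection,
and `∑ A_k* A_k = 1` turns `U` into the reflection `2P - 1`, a self-adjoint unitary. Expanding
`U (ρ ⊗ I) U`, the partial trace of `P (ρ ⊗ I) P = V (V*(ρ ⊗ I)V) V*` is `Φ(Φ*(ρ))`, since
`V*(ρ ⊗ I)V = Φ*(ρ)`, while the partial traces of `P (ρ ⊗ I)`, `(ρ ⊗ I) P` and `ρ ⊗ I` are
`ρ`, `ρ` and `4ρ`; the last three cancel exactly because the ancilla has dimension `4`.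
-/

namespace Matrix

variable {l m n ι R : Type*} [Fintype ι]

def blockCol (K : ι → Matrix m n R) : Matrix (m × ι) n R :=
  of fun ik j => K ik.2 ik.1 j

omit [Fintype ι] in
theorem blockCol_mul_conjTranspose_blockCol_apply [Fintype n] [Mul R] [AddCommMonoid R] [Star R]
    (K L : ι → Matrix m n R) (a b : m) (p q : ι) :
    (blockCol K * (blockCol L)ᴴ) (a, p) (b, q) = (K p * (L q)ᴴ) a b :=
  rfl

section partialTrace

variable [CommSemiring R]

def partialTrace : Matrix (m × ι) (n × ι) R →ₗ[R] Matrix m n R where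
  toFun M := of fun i j => ∑ k, M (i, k) (j, k)
  map_add' M N := by ext; simp [Finset.sum_add_distrib]
  map_smul' c M := by ext; simp [Finset.mul_sum]

theorem partialTrace_apply (M : Matrix (m × ι) (n × ι) R) (i : m) (j : n) :
    partialTrace M i j = ∑ k, M (i, k) (j, k) :=
  rfl

theorem partialTrace_kronecker (ρ : Matrix m n R) (σ : Matrix ι ι R) :
    partialTrace (ρ ⊗ₖ σ) = σ.trace • ρ := by
  ext i j
  simp [partialTrace_apply, trace, Finset.mul_sum, mul_comm]

variable [DecidableEq ι]

theorem partialTrace_mul_kronecker_one [Fintype m] (X : Matrix (l × ι) (m × ι) R)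
    (ρ : Matrix m n R) : partialTrace (X * (ρ ⊗ₖ (1 : Matrix ι ι R))) = partialTrace X * ρ := by
  ext i j
  simp only [partialTrace_apply, mul_apply, kroneckerMap_apply, one_apply, mul_ite, mul_one,
    mul_zero, Fintype.sum_prod_type, Finset.sum_ite_eq', Finset.mem_univ, if_true, Finset.sum_mul]
  exact Finset.sum_comm

theorem partialTrace_kronecker_one_mul [Fintype m] (ρ : Matrix l m R)
    (X : Matrix (m × ι) (n × ι) R) :
    partialTrace ((ρ ⊗ₖ (1 : Matrix ι ι R)) * X) = ρ * partialTrace X := by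
  ext i j
  simp only [partialTrace_apply, mul_apply, kroneckerMap_apply, one_apply, mul_ite, mul_one,
    mul_zero, ite_mul, zero_mul, Fintype.sum_prod_type, Finset.sum_ite_eq, Finset.mem_univ, if_true,
    Finset.mul_sum]
  exact Finset.sum_comm

end partialTrace

section blockCol

variable [CommSemiring R] [StarRing R]

theorem partialTrace_blockCol_mul_mul_conjTranspose [Fintype n] (K L : ι → Matrix m n R)
    (Y : Matrix n n R) :
    partialTrace (blockCol K * Y * (blockCol L)ᴴ) = ∑ k, K k * Y * (L k)ᴴ := by
  ext i j
  simp [partialTrace_apply, blockCol, mul_apply, sum_apply]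

variable [Fintype m] [DecidableEq ι]

theorem conjTranspose_blockCol_mul_kronecker_one_mul (K L : ι → Matrix m n R)
    (ρ : Matrix m m R) :
    (blockCol K)ᴴ * (ρ ⊗ₖ (1 : Matrix ι ι R)) * blockCol L = ∑ k, (K k)ᴴ * ρ * L k := by
  ext i j
  simp only [blockCol, mul_apply, conjTranspose_apply, of_apply, kroneckerMap_apply, one_apply,
    mul_ite, mul_one, mul_zero, Fintype.sum_prod_type, Finset.sum_ite_eq', Finset.mem_univ,
    if_true, sum_apply]
  exact Finset.sum_comm

theorem conjTranspose_blockCol_mul_blockCol [DecidableEq m] (K L : ι → Matrix m n R) :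
    (blockCol K)ᴴ * blockCol L = ∑ k, (K k)ᴴ * L k := by
  simpa using conjTranspose_blockCol_mul_kronecker_one_mul K L 1

end blockCol

theorem isStarProjection_mul_conjTranspose [Fintype m] [Fintype n] [DecidableEq n] [Semiring R]
    [StarRing R] {V : Matrix m n R} (hV : Vᴴ * V = 1) : IsStarProjection (V * Vᴴ) where
  isIdempotentElem := by
    rw [IsIdempotentElem, ← Matrix.mul_assoc, Matrix.mul_assoc V, hV, Matrix.mul_one]
  isSelfAdjoint := isHermitian_mul_conjTranspose_self V

end Matrix

section Ufact

variable {d : ℕ} (A : Fin 4 → Matrix (Fin d) (Fin d) ℂ)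

theorem Ufact_apply (a b : Fin d) (p q : Fin 4) :
    Ufact d A (a, p) (b, q) =
      2 * ((A p)ᴴ * A q) a b - if p = q then (∑ j, (A j)ᴴ * A j) a b else 0 := by
  have hE : ∀ j k : Fin 4,
      ((2 : ℂ) • single j k (1 : ℂ) - if j = k then (1 : Matrix (Fin 4) (Fin 4) ℂ) else 0) p q =
        2 * (if j = p ∧ k = q then 1 else 0) - if p = q ∧ j = k then (1 : ℂ) else 0 := by
    intro j k
    by_cases hjk : j = k <;> simp [hjk, single_apply, one_apply]
  simp only [Ufact, Matrix.sum_apply, kronecker_apply, hE, mul_sub, Finset.sum_sub_distrib, mul_ite,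
    mul_zero, mul_one, ite_and, Finset.sum_ite_irrel, Finset.sum_ite_eq, Finset.sum_ite_eq',
    Finset.mem_univ, if_true, Finset.sum_const_zero]
  ring

theorem Ufact_eq (h1 : ∑ k : Fin 4, (A k)ᴴ * A k = 1) :
    Ufact d A = 2 * (blockCol (fun k => (A k)ᴴ) * (blockCol fun k => (A k)ᴴ)ᴴ) - 1 := by
  rw [two_mul]
  ext ⟨a, p⟩ ⟨b, q⟩
  rw [Ufact_apply, h1, Matrix.sub_apply, Matrix.add_apply,
    blockCol_mul_conjTranspose_blockCol_apply, conjTranspose_conjTranspose]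
  by_cases hpq : p = q <;> simp [hpq, one_apply, two_mul, and_comm]

theorem Ufact_mem_unitaryGroup (h1 : ∑ k : Fin 4, (A k)ᴴ * A k = 1)
    (h2 : ∑ k : Fin 4, A k * (A k)ᴴ = 1) :
    Ufact d A ∈ unitaryGroup (Fin d × Fin 4) ℂ := by
  have hV : (blockCol fun k => (A k)ᴴ)ᴴ * blockCol (fun k => (A k)ᴴ) = 1 := by
    simpa [conjTranspose_blockCol_mul_blockCol] using h2
  rw [Ufact_eq A h1]
  exact (isStarProjection_mul_conjTranspose hV).two_mul_sub_one_mem_unitary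

theorem partialTrace_Ufact_conj (h1 : ∑ k : Fin 4, (A k)ᴴ * A k = 1)
    (ρ : Matrix (Fin d) (Fin d) ℂ) :
    partialTrace ((Ufact d A)ᴴ * (ρ ⊗ₖ (((1 : ℂ) / 4) • (1 : Matrix (Fin 4) (Fin 4) ℂ))) *
      Ufact d A) = PhiOf d A (PhiStarOf d A ρ) := by
  set V := blockCol fun k => (A k)ᴴ
  set P := V * Vᴴ
  set N := ρ ⊗ₖ (1 : Matrix (Fin 4) (Fin 4) ℂ)
  have hU : Ufact d A = 2 * P - 1 := Ufact_eq A h1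
  have hUH : (Ufact d A)ᴴ = Ufact d A := by
    rw [hU, two_mul, conjTranspose_sub, conjTranspose_add, conjTranspose_one,
      (isHermitian_mul_conjTranspose_self V).eq]
  have hP : partialTrace P = 1 := by
    simpa [h1] using
      partialTrace_blockCol_mul_mul_conjTranspose (fun k => (A k)ᴴ) (fun k => (A k)ᴴ) 1
  have hPNP : partialTrace (P * N * P) = PhiOf d A (PhiStarOf d A ρ) := by
    rw [show P * N * P = V * (Vᴴ * N * V) * Vᴴ by simp only [P, Matrix.mul_assoc],
      conjTranspose_blockCol_mul_kronecker_one_mul, partialTrace_blockCol_mul_mul_conjTranspose]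
    simp [PhiOf, PhiStarOf]
  have hPN : partialTrace (P * N) = ρ := by
    rw [partialTrace_mul_kronecker_one, hP, Matrix.one_mul]
  have hNP : partialTrace (N * P) = ρ := by
    rw [partialTrace_kronecker_one_mul, hP, Matrix.mul_one]
  have hN : partialTrace N = (4 : ℂ) • ρ := by
    simp [N, partialTrace_kronecker]
  have hexpand : (2 * P - 1) * N * (2 * P - 1) =
      4 • (P * N * P) - 2 • (P * N) - 2 • (N * P) + N := by
    noncomm_ring
  rw [hUH, hU, kronecker_smul, Matrix.mul_smul, Matrix.smul_mul, hexpand]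
  simp only [map_smul, map_add, map_sub, map_nsmul, hPNP, hPN, hNP, hN]
  module

theorem PhiOf_PhiStarOf (ρ : Matrix (Fin d) (Fin d) ℂ) :
    PhiOf d A (PhiStarOf d A ρ) = ∑ j, ∑ k, (A j)ᴴ * A k * ρ * (A k)ᴴ * A j := by
  simp only [PhiOf, PhiStarOf, Finset.mul_sum, Finset.sum_mul, Matrix.mul_assoc]

end Ufact

theorem Ufact_unitary_and_factorization_general (d : ℕ)
    (A : Fin 4 → Matrix (Fin d) (Fin d) ℂ)
    (h1 : ∑ k : Fin 4, (A k)ᴴ * A k = 1) (h2 : ∑ k : Fin 4, A k * (A k)ᴴ = 1) :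
    Ufact d A ∈ Matrix.unitaryGroup (Fin d × Fin 4) ℂ ∧
    (∀ ρ : Matrix (Fin d) (Fin d) ℂ, ∀ i j : Fin d,
      (∑ k : Fin 4,
        ((Ufact d A)ᴴ * (ρ ⊗ₖ (((1 : ℂ) / 4) • (1 : Matrix (Fin 4) (Fin 4) ℂ))) *
          Ufact d A) (i, k) (j, k)) =
      (∑ j' : Fin 4, ∑ k' : Fin 4, (A j')ᴴ * A k' * ρ * (A k')ᴴ * A j') i j) ∧
    (∃ U : Matrix (Fin d × Fin 4) (Fin d × Fin 4) ℂ,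
      U ∈ Matrix.unitaryGroup (Fin d × Fin 4) ℂ ∧
      ∀ ρ : Matrix (Fin d) (Fin d) ℂ, ∀ i j : Fin d,
        PhiOf d A (PhiStarOf d A ρ) i j =
          ∑ k : Fin 4,
            (Uᴴ * (ρ ⊗ₖ (((1 : ℂ) / 4) • (1 : Matrix (Fin 4) (Fin 4) ℂ))) * U)
              (i, k) (j, k)) := by
  have hU := Ufact_mem_unitaryGroup A h1 h2
  have hconj : ∀ ρ i j, (∑ k : Fin 4,
      ((Ufact d A)ᴴ * (ρ ⊗ₖ (((1 : ℂ) / 4) • (1 : Matrix (Fin 4) (Fin 4) ℂ))) *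
        Ufact d A) (i, k) (j, k)) = PhiOf d A (PhiStarOf d A ρ) i j := fun ρ i j =>
    congrFun (congrFun (partialTrace_Ufact_conj A h1 ρ) i) j
  refine ⟨hU, fun ρ i j => ?_, Ufact d A, hU, fun ρ i j => (hconj ρ i j).symm⟩
  rw [hconj, PhiOf_PhiStarOf]

/-- If `∑ A_k* A_k = I = ∑ A_k A_k*`, then `U` is unitary,
`(I ⊗ Tr)(U*(ρ ⊗ (1/4)I₄)U) = ∑_{j,k} A_j* A_k ρ A_k* A_j` for all `ρ`; consequently
`Φ ∘ Φ*` (a UCPT map with Choi rank at most 4) has an exact factorization through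
`M_d(ℂ) ⊗ M₄(ℂ)`. -/
theorem Ufact_unitary_and_factorization (d : ℕ) (hd : 1 ≤ d)
    (A : Fin 4 → Matrix (Fin d) (Fin d) ℂ)
    (h1 : ∑ k : Fin 4, (A k)ᴴ * A k = 1) (h2 : ∑ k : Fin 4, A k * (A k)ᴴ = 1) :
    Ufact d A ∈ Matrix.unitaryGroup (Fin d × Fin 4) ℂ ∧
    (∀ ρ : Matrix (Fin d) (Fin d) ℂ, ∀ i j : Fin d,
      (∑ k : Fin 4,
        ((Ufact d A)ᴴ * (ρ ⊗ₖ (((1 : ℂ) / 4) • (1 : Matrix (Fin 4) (Fin 4) ℂ))) *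
          Ufact d A) (i, k) (j, k)) =
      (∑ j' : Fin 4, ∑ k' : Fin 4, (A j')ᴴ * A k' * ρ * (A k')ᴴ * A j') i j) ∧
    (∃ U : Matrix (Fin d × Fin 4) (Fin d × Fin 4) ℂ,
      U ∈ Matrix.unitaryGroup (Fin d × Fin 4) ℂ ∧
      ∀ ρ : Matrix (Fin d) (Fin d) ℂ, ∀ i j : Fin d,
        PhiOf d A (PhiStarOf d A ρ) i j =
          ∑ k : Fin 4,
            (Uᴴ * (ρ ⊗ₖ (((1 : ℂ) / 4) • (1 : Matrix (Fin 4) (Fin 4) ℂ))) * U)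
              (i, k) (j, k)) :=
  Ufact_unitary_and_factorization_general d A h1 h2

end
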